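/- (Behavior of radial eigenfunctions at infinity.) Fix ρ > 0 and an integer k ≥ 1. Let λ ∈ ℝ and let φ : ℝ → ℝ be a normalized radial eigenfunction on [0, ∞) with eigenvalue λ. Then: if λ < 0, φ(r) tends to +∞ as r → ∞ (Tendsto φ atTop atTop); if λ = 0, φ(r) tends to 1 as r → ∞; and if λ > 0, φ(r) tends to 0 as r → ∞. -/

import Mathlib

open MeasureTheory Real Filter Set Topology

/-!
Written as `(sinh^k(r/ρ) φ')' = -λ sinh^k(r/ρ) φ`, the equation makes the flux `sinh^k(r/ρ) φ'(r)`
converge to some `L` as `r → 0⁺`. If `L ≠ 0`, then `|φ'(r)| ≳ 1/r` near `0` and `φ` would blow up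
logarithmically, contradicting continuity at `0`; hence
`sinh^k(r/ρ) φ'(r) = -λ ∫₀ʳ sinh^k(t/ρ) φ(t) dt`.

For `λ = 0` this makes `φ` constant. For `λ < 0` it keeps `φ` positive, hence increasing, and the
integral over `[r - ρ, r]` alone already gives `φ' ≥ c > 0` for large `r`. For `λ > 0` the energy
`E = φ'² + λφ²` satisfies `E' = -2(k/ρ) coth(r/ρ) φ'² ≤ 0`, so it converges and `∫ φ'²` is finite;
as `φ''` is bounded this forces `φ' → 0`. Then `(φ φ')' = 2φ'² - E - (k/ρ) coth(r/ρ) φ φ'` tends to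
minus the limit of `E` while `φ φ' → 0`, so `E → 0` and with it `φ → 0`.
-/

namespace Real

lemma sinh_le_two_mul {x : ℝ} (h0 : 0 ≤ x) (h1 : x ≤ 1 / 2) : sinh x ≤ 2 * x := by
  have hexp : exp x * exp (-x) = 1 := by rw [← exp_add, add_neg_cancel, exp_zero]
  rw [sinh_eq]
  nlinarith [add_one_le_exp (-x), exp_pos (-x)]

lemma one_le_cosh_div_sinh {x : ℝ} (hx : 0 < x) : 1 ≤ cosh x / sinh x :=
  (one_le_div (sinh_pos_iff.2 hx)).2 (sinh_lt_cosh x).le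

lemma cosh_div_sinh_le_of_le {x y : ℝ} (hx : 0 < x) (hxy : x ≤ y) :
    cosh y / sinh y ≤ cosh x / sinh x := by
  rw [div_le_div_iff₀ (sinh_pos_iff.2 (hx.trans_le hxy)) (sinh_pos_iff.2 hx)]
  have : 0 ≤ sinh (y - x) := sinh_nonneg_iff.2 (sub_nonneg.2 hxy)
  rw [sinh_sub] at this
  linarith

lemma exp_neg_mul_sinh_le_two_mul_sinh_sub {x a : ℝ} (h : 1 ≤ x - a) :
    exp (-a) * sinh x ≤ 2 * sinh (x - a) := by
  have hx : exp (-a) * exp x = exp (x - a) := by rw [← exp_add]; ring_nf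
  have hlarge : 2 ≤ exp (x - a) := by linarith [add_one_le_exp 1, exp_le_exp.2 h]
  have hsmall : exp (-(x - a)) ≤ 1 := exp_le_one_iff.2 (by linarith)
  rw [sinh_eq, sinh_eq]
  nlinarith [mul_pos (exp_pos (-a)) (exp_pos (-x))]

end Real

lemma forall_ge_pos_of_continuousOn {f : ℝ → ℝ} {a : ℝ} (hf : ContinuousOn f (Ici a))
    (ha : 0 < f a) (hstep : ∀ b, a < b → (∀ t ∈ Ico a b, 0 < f t) → 0 < f b) :
    ∀ t, a ≤ t → 0 < f t := by
  by_contra! hneg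
  set B := Ici a ∩ f ⁻¹' Iic 0
  have hB : IsClosed B := hf.preimage_isClosed_of_isClosed isClosed_Ici isClosed_Iic
  have hBbdd : BddBelow B := ⟨a, fun _ ht => ht.1⟩
  have hbB : sInf B ∈ B := hB.csInf_mem hneg hBbdd
  have hab : a < sInf B := hbB.1.lt_of_ne fun h => by
    have := hbB.2; rw [← h] at this; exact (not_le.2 ha) this
  refine not_lt.2 hbB.2 (hstep _ hab fun t ht => ?_)
  by_contra! hft
  exact not_le.2 ht.2 (csInf_le hBbdd ⟨ht.1, hft⟩)

lemma tendsto_atTop_of_eventually_le_deriv {f f' : ℝ → ℝ} {c : ℝ} (hc : 0 < c)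
    (h : ∀ᶠ x in atTop, HasDerivAt f (f' x) x ∧ c ≤ f' x) : Tendsto f atTop atTop := by
  obtain ⟨R, hR⟩ := eventually_atTop.1 h
  have hgrowth : ∀ x ≥ R, f R + c * (x - R) ≤ f x := fun x hx => by
    have := (convex_Ici R).mul_sub_le_image_sub_of_le_deriv
      (fun y hy => (hR y hy).1.continuousAt.continuousWithinAt)
      (fun y hy => (hR y (interior_subset hy)).1.differentiableAt.differentiableWithinAt)
      (fun y hy => (hR y (interior_subset hy)).1.deriv ▸ (hR y (interior_subset hy)).2)
      R self_mem_Ici x hx hx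
    linarith
  refine tendsto_atTop_mono' atTop (eventually_ge_atTop R |>.mono hgrowth) ?_
  exact tendsto_atTop_add_const_left _ _
    ((tendsto_atTop_add_const_right _ _ tendsto_id).const_mul_atTop hc)

lemma eq_zero_of_tendsto_of_tendsto_deriv {f f' : ℝ → ℝ} {a m : ℝ}
    (hf : ∀ᶠ x in atTop, HasDerivAt f (f' x) x) (hfa : Tendsto f atTop (𝓝 a))
    (hf'm : Tendsto f' atTop (𝓝 m)) : m = 0 := by
  wlog hm : 0 < m generalizing f f' a m
  · rcases (not_lt.1 hm).lt_or_eq with hm | hm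
    · exact neg_eq_zero.1 <| this (hf.mono fun x hx => hx.neg) hfa.neg hf'm.neg (neg_pos.2 hm)
    · exact hm
  have hgrow : Tendsto f atTop atTop := tendsto_atTop_of_eventually_le_deriv (half_pos hm)
    (hf.and (hf'm.eventually (lt_mem_nhds (half_lt_self hm))) |>.mono fun _ hx => ⟨hx.1, hx.2.le⟩)
  exact absurd hgrow (not_tendsto_atTop_of_tendsto_nhds hfa)

lemma tendsto_nhdsGT_zero_atBot_of_div_le_deriv {f : ℝ → ℝ} {a c : ℝ} (ha : 0 < a) (hc : 0 < c)
    (hf : ∀ s ∈ Ioc 0 a, DifferentiableAt ℝ f s) (hf' : ∀ s ∈ Ioc 0 a, c / s ≤ deriv f s) :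
    Tendsto f (𝓝[>] 0) atBot := by
  have hderiv : ∀ s ∈ Ioc 0 a,
      HasDerivAt (fun s => f s - c * log s) (deriv f s - c * s⁻¹) s := fun s hs =>
    (hf s hs).hasDerivAt.sub ((hasDerivAt_log hs.1.ne').const_mul c)
  have hmono : MonotoneOn (fun s => f s - c * log s) (Ioc 0 a) := by
    refine monotoneOn_of_deriv_nonneg (convex_Ioc 0 a)
      (fun s hs => (hderiv s hs).continuousAt.continuousWithinAt) (fun s hs => ?_) fun s hs => ?_
    all_goals rw [interior_Ioc] at hs
    · exact (hderiv s (Ioo_subset_Ioc_self hs)).differentiableAt.differentiableWithinAt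
    · rw [(hderiv s (Ioo_subset_Ioc_self hs)).deriv, sub_nonneg, ← div_eq_mul_inv]
      exact hf' s (Ioo_subset_Ioc_self hs)
  have hbound : ∀ s ∈ Ioc 0 a, f s ≤ f a - c * log a + c * log s := fun s hs => by
    have := hmono hs ⟨ha, le_rfl⟩ hs.2
    simp only at this
    linarith
  refine tendsto_atBot_mono' _ (eventually_of_mem (Ioc_mem_nhdsGT ha) hbound) ?_
  exact tendsto_atBot_add_const_left _ _ (tendsto_log_nhdsGT_zero.const_mul_atBot hc)

lemma eq_zero_of_tendsto_mul_deriv_nhdsGT_zero {f h : ℝ → ℝ} {C L ℓ : ℝ}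
    (hh : ∀ᶠ s in 𝓝[>] 0, 0 < h s ∧ h s ≤ C * s)
    (hf : ∀ᶠ s in 𝓝[>] 0, DifferentiableAt ℝ f s)
    (hL : Tendsto (fun s => h s * deriv f s) (𝓝[>] 0) (𝓝 L))
    (hℓ : Tendsto f (𝓝[>] 0) (𝓝 ℓ)) : L = 0 := by
  by_contra hL0
  have hLL : ∀ᶠ s in 𝓝[>] 0, L ^ 2 / 2 < L * (h s * deriv f s) :=
    (hL.const_mul L).eventually (lt_mem_nhds (by nlinarith [sq_pos_of_ne_zero hL0]))
  obtain ⟨a, ha, hsub⟩ := mem_nhdsGT_iff_exists_Ioc_subset.1 (hh.and (hf.and hLL))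
  have hC : 0 < C := by
    obtain ⟨hpos, hle⟩ := (hsub ⟨ha, le_rfl⟩).1
    nlinarith [mem_Ioi.1 ha]
  have hblow : Tendsto (fun s => L * f s) (𝓝[>] 0) atBot := by
    refine tendsto_nhdsGT_zero_atBot_of_div_le_deriv ha (c := L ^ 2 / 2 / C)
      (by positivity) (fun s hs => ((hsub hs).2.1).const_mul L) fun s hs => ?_
    obtain ⟨⟨hpos, hle⟩, hd, hlt⟩ := hsub hs
    rw [deriv_const_mul _ hd, div_div, div_le_iff₀ (mul_pos hC hs.1)]
    nlinarith [mul_le_mul_of_nonneg_left hle (le_of_lt (show 0 < L * deriv f s by nlinarith))]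
  exact not_tendsto_atBot_of_tendsto_nhds (hℓ.const_mul L) hblow

lemma AntitoneOn.exists_tendsto_atTop {f : ℝ → ℝ} {R : ℝ} (hf : AntitoneOn f (Ici R))
    (hbdd : BddBelow (f '' Ici R)) : ∃ e, Tendsto f atTop (𝓝 e) := by
  have hanti : Antitone fun x => f (max R x) := fun x y hxy =>
    hf (le_max_left R x) (le_max_left R y) (max_le_max le_rfl hxy)
  have hbdd' : BddBelow (range fun x => f (max R x)) :=
    hbdd.mono (range_subset_iff.2 fun x => mem_image_of_mem f (le_max_left R x))
  refine ⟨_, (tendsto_atTop_ciInf hanti hbdd').congr' ?_⟩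
  filter_upwards [eventually_ge_atTop R] with x hx
  rw [max_eq_right hx]

lemma tendsto_zero_of_deriv_le_neg_mul_sq {E E' f f' : ℝ → ℝ} {R M c e : ℝ} (hc : 0 < c)
    (hE : ∀ x ≥ R, HasDerivAt E (E' x) x) (hE' : ∀ x ≥ R, E' x ≤ -(c * f x ^ 2))
    (hEe : Tendsto E atTop (𝓝 e))
    (hf : ∀ x ≥ R, HasDerivAt f (f' x) x) (hf' : ∀ x ≥ R, |f' x| ≤ M) :
    Tendsto f atTop (𝓝 0) := by
  have hM : 0 ≤ M := (abs_nonneg _).trans (hf' R le_rfl)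
  have hlip : ∀ x ≥ R, ∀ t ≥ x, |f t - f x| ≤ M * (t - x) := fun x hx t ht => by
    have := (convex_Ici R).norm_image_sub_le_of_norm_hasDerivWithin_le
      (fun y hy => (hf y hy).hasDerivWithinAt) (fun y hy => hf' y hy) hx (hx.trans ht)
    rwa [Real.norm_eq_abs, Real.norm_eq_abs, abs_of_nonneg (sub_nonneg.2 ht)] at this
  have hdecay : ∀ x ≥ R, ∀ y ≥ x, ∀ C, (∀ t ∈ Icc x y, E' t ≤ -C) → E y - E x ≤ -C * (y - x) :=
    fun x hx y hxy C hC => (convex_Icc x y).image_sub_le_mul_sub_of_deriv_le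
      (fun t ht => (hE t (hx.trans ht.1)).continuousAt.continuousWithinAt)
      (fun t ht => (hE t (hx.trans (interior_subset ht).1)).differentiableAt.differentiableWithinAt)
      (fun t ht => (hE t (hx.trans (interior_subset ht).1)).deriv ▸ hC t (interior_subset ht))
      x (left_mem_Icc.2 hxy) y (right_mem_Icc.2 hxy) hxy
  -- If `|f x| ≥ ε`, then `|f| ≥ ε / 2` on `[x, x + δ]`, so `E` drops there by a fixed amount,
  -- which cannot happen for arbitrarily large `x` since `E` converges.
  rw [Metric.tendsto_nhds]
  intro ε hε
  set δ := ε / (2 * (M + 1))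
  have hδ : 0 < δ := by positivity
  have hMδ : M * δ ≤ ε / 2 := by
    rw [show ε / 2 = (M + 1) * δ by simp only [δ]; field_simp]
    nlinarith
  have hstep : Tendsto (fun x => E (x + δ) - E x) atTop (𝓝 0) := by
    simpa using (hEe.comp (tendsto_atTop_add_const_right _ δ tendsto_id)).sub hEe
  have hgap : 0 < c * (ε / 2) ^ 2 * δ := by positivity
  filter_upwards [hstep.eventually (lt_mem_nhds (neg_lt_zero.2 hgap)), eventually_ge_atTop R]
    with x hx hxR
  rw [Real.dist_0_eq_abs]
  by_contra! hfx
  have hbig : ∀ t ∈ Icc x (x + δ), E' t ≤ -(c * (ε / 2) ^ 2) := fun t ht => by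
    have h1 := hlip x hxR t ht.1
    have h2 : ε / 2 ≤ |f t| := by
      have := abs_sub_abs_le_abs_sub (f x) (f t)
      rw [abs_sub_comm] at this
      nlinarith [mul_le_mul_of_nonneg_left (show t - x ≤ δ by linarith [ht.2]) hM]
    have h3 : (ε / 2) ^ 2 ≤ f t ^ 2 := by
      rw [← sq_abs (f t)]; exact pow_le_pow_left₀ (by positivity) h2 2
    linarith [hE' t (hxR.trans ht.1), mul_le_mul_of_nonneg_left h3 hc.le]
  have := hdecay x hxR (x + δ) (by linarith) _ hbig
  simp only [add_sub_cancel_left] at this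
  linarith

structure IsRadialSolution (ρ : ℝ) (k : ℕ) (lam : ℝ) (φ : ℝ → ℝ) : Prop where
  differentiableAt : ∀ r, 0 < r → DifferentiableAt ℝ φ r
  differentiableAt_deriv : ∀ r, 0 < r → DifferentiableAt ℝ (deriv φ) r
  ode : ∀ r, 0 < r → deriv (deriv φ) r + (k / ρ) * (cosh (r / ρ) / sinh (r / ρ)) * deriv φ r
    + lam * φ r = 0

noncomputable def radialEnergy (lam : ℝ) (φ : ℝ → ℝ) (r : ℝ) : ℝ := deriv φ r ^ 2 + lam * φ r ^ 2

lemma radialEnergy_nonneg {lam : ℝ} (hlam : 0 ≤ lam) (φ : ℝ → ℝ) (r : ℝ) :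
    0 ≤ radialEnergy lam φ r := by
  unfold radialEnergy
  positivity

lemma eventually_sinh_div_pow_le {ρ : ℝ} {k : ℕ} (hρ : 0 < ρ) (hk : 1 ≤ k) :
    ∀ᶠ s in 𝓝[>] 0, 0 < sinh (s / ρ) ^ k ∧ sinh (s / ρ) ^ k ≤ 2 / ρ * s := by
  filter_upwards [Ioc_mem_nhdsGT (by positivity : 0 < ρ / 4)] with s hs
  have hx : 0 < s / ρ := div_pos hs.1 hρ
  have hx' : s / ρ ≤ 1 / 4 := by rw [div_le_iff₀ hρ]; linarith [hs.2]
  have hsinh := sinh_le_two_mul hx.le (by linarith)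
  have hpos := sinh_pos_iff.2 hx
  refine ⟨pow_pos hpos k, (pow_le_of_le_one hpos.le (by linarith) (by omega)).trans ?_⟩
  calc sinh (s / ρ) ≤ 2 * (s / ρ) := hsinh
    _ = 2 / ρ * s := by ring

lemma intervalIntegrable_sinh_pow_mul {ρ : ℝ} {k : ℕ} {φ : ℝ → ℝ} {a b : ℝ}
    (hc : ContinuousOn φ (Ici 0)) (ha : 0 ≤ a) (hb : 0 ≤ b) :
    IntervalIntegrable (fun t => sinh (t / ρ) ^ k * φ t) volume a b := by
  refine ContinuousOn.intervalIntegrable (((continuous_sinh.comp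
    (continuous_id.div_const ρ)).pow k).continuousOn.mul (hc.mono fun t ht => ?_))
  rcases mem_uIcc.1 ht with h | h
  exacts [ha.trans h.1, hb.trans h.1]

namespace IsRadialSolution

variable {ρ : ℝ} {k : ℕ} {lam : ℝ} {φ : ℝ → ℝ} {r : ℝ}

lemma deriv_deriv_eq (hφ : IsRadialSolution ρ k lam φ) (hr : 0 < r) :
    deriv (deriv φ) r = -((k / ρ) * (cosh (r / ρ) / sinh (r / ρ)) * deriv φ r + lam * φ r) := by
  linarith [hφ.ode r hr]

lemma hasDerivAt_sinh_pow_mul_deriv (hφ : IsRadialSolution ρ k lam φ) (hρ : ρ ≠ 0)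
    (hr : 0 < r) :
    HasDerivAt (fun x => sinh (x / ρ) ^ k * deriv φ x) (-(lam * (sinh (r / ρ) ^ k * φ r))) r := by
  have hS : HasDerivAt (fun x => sinh (x / ρ)) (cosh (r / ρ) / ρ) r := by
    simpa [div_eq_mul_inv, mul_comm] using ((hasDerivAt_id r).div_const ρ).sinh
  have hsinh : sinh (r / ρ) ≠ 0 := by simp [hr.ne', hρ]
  refine ((hS.fun_pow k).mul (hφ.differentiableAt_deriv r hr).hasDerivAt).congr_deriv ?_
  rw [hφ.deriv_deriv_eq hr]
  rcases k with _ | k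
  · simp
  · field_simp
    push_cast
    ring

lemma hasDerivAt_radialEnergy (hφ : IsRadialSolution ρ k lam φ) (hr : 0 < r) :
    HasDerivAt (radialEnergy lam φ)
      (-(2 * (k / ρ) * (cosh (r / ρ) / sinh (r / ρ)) * deriv φ r ^ 2)) r := by
  refine (((hφ.differentiableAt_deriv r hr).hasDerivAt.fun_pow 2).add
    (((hφ.differentiableAt r hr).hasDerivAt.fun_pow 2).const_mul lam)).congr_deriv ?_
  rw [hφ.deriv_deriv_eq hr]
  ring

lemma hasDerivAt_mul_deriv (hφ : IsRadialSolution ρ k lam φ) (hr : 0 < r) :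
    HasDerivAt (fun x => φ x * deriv φ x) (2 * deriv φ r ^ 2 - radialEnergy lam φ r
      - k / ρ * (cosh (r / ρ) / sinh (r / ρ)) * (φ r * deriv φ r)) r := by
  refine ((hφ.differentiableAt r hr).hasDerivAt.mul
    (hφ.differentiableAt_deriv r hr).hasDerivAt).congr_deriv ?_
  rw [hφ.deriv_deriv_eq hr, radialEnergy]
  ring

lemma exists_forall_sinh_pow_mul_deriv_add_integral_eq (hφ : IsRadialSolution ρ k lam φ)
    (hρ : ρ ≠ 0) (hc : ContinuousOn φ (Ici 0)) : ∃ L, ∀ x ∈ Ioi (0 : ℝ),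
      sinh (x / ρ) ^ k * deriv φ x + lam * ∫ t in 0..x, sinh (t / ρ) ^ k * φ t = L := by
  set g := fun t => sinh (t / ρ) ^ k * φ t
  have hgc : ∀ x ∈ Ioi (0 : ℝ), ContinuousAt g x := fun x hx =>
    ((continuous_sinh.comp (continuous_id.div_const ρ)).pow k).continuousAt.mul
      (hφ.differentiableAt x hx).continuousAt
  have hG : ∀ x ∈ Ioi (0 : ℝ), HasDerivAt (fun x => ∫ t in 0..x, g t) (g x) x := fun x hx =>
    intervalIntegral.integral_hasDerivAt_right (intervalIntegrable_sinh_pow_mul hc le_rfl hx.le)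
      (ContinuousOn.stronglyMeasurableAtFilter isOpen_Ioi
        (fun y hy => (hgc y hy).continuousWithinAt) x hx) (hgc x hx)
  have hF : ∀ x ∈ Ioi (0 : ℝ),
      HasDerivAt (fun x => sinh (x / ρ) ^ k * deriv φ x + lam * ∫ t in 0..x, g t) 0 x :=
    fun x hx => ((hφ.hasDerivAt_sinh_pow_mul_deriv hρ hx).add
      ((hG x hx).const_mul lam)).congr_deriv (by ring)
  exact isOpen_Ioi.exists_is_const_of_deriv_eq_zero isPreconnected_Ioi
    (fun x hx => (hF x hx).differentiableAt.differentiableWithinAt) fun x hx => (hF x hx).deriv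

lemma sinh_pow_mul_deriv_eq_integral (hφ : IsRadialSolution ρ k lam φ) (hρ : 0 < ρ) (hk : 1 ≤ k)
    (hc : ContinuousOn φ (Ici 0)) (hr : 0 < r) :
    sinh (r / ρ) ^ k * deriv φ r = -lam * ∫ t in 0..r, sinh (t / ρ) ^ k * φ t := by
  obtain ⟨L, hL⟩ := hφ.exists_forall_sinh_pow_mul_deriv_add_integral_eq hρ.ne' hc
  have hG0 : Tendsto (fun x => ∫ t in 0..x, sinh (t / ρ) ^ k * φ t) (𝓝[>] 0) (𝓝 0) := by
    have hcont := intervalIntegral.continuousOn_primitive_interval'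
      (intervalIntegrable_sinh_pow_mul (ρ := ρ) (k := k) hc le_rfl zero_le_one) left_mem_uIcc
    have hmem : uIcc (0 : ℝ) 1 ∈ 𝓝[>] 0 := by
      rw [uIcc_of_le zero_le_one]
      exact mem_of_superset (Ioc_mem_nhdsGT one_pos) Ioc_subset_Icc_self
    simpa using ((hcont 0 left_mem_uIcc).mono_of_mem_nhdsWithin hmem).tendsto
  have hflux : Tendsto (fun x => sinh (x / ρ) ^ k * deriv φ x) (𝓝[>] 0) (𝓝 L) := by
    have := (tendsto_const_nhds (x := L)).sub (hG0.const_mul lam)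
    rw [mul_zero, sub_zero] at this
    refine this.congr' (eventually_mem_nhdsWithin.mono fun x hx => ?_)
    rw [← hL x hx]
    ring
  have hL0 : L = 0 := eq_zero_of_tendsto_mul_deriv_nhdsGT_zero (eventually_sinh_div_pow_le hρ hk)
    (eventually_mem_nhdsWithin.mono fun x hx => hφ.differentiableAt x hx) hflux
    ((hc 0 self_mem_Ici).tendsto.mono_left (nhdsWithin_mono 0 Ioi_subset_Ici_self))
  linarith [hL r hr]

lemma tendsto_of_lam_eq_zero (hφ : IsRadialSolution ρ k lam φ) (hρ : 0 < ρ) (hk : 1 ≤ k)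
    (hc : ContinuousOn φ (Ici 0)) (hlam : lam = 0) : Tendsto φ atTop (𝓝 (φ 0)) := by
  have hderiv : ∀ s, 0 < s → deriv φ s = 0 := fun s hs => by
    have := hφ.sinh_pow_mul_deriv_eq_integral hρ hk hc hs
    rw [hlam, neg_zero, zero_mul] at this
    exact (mul_eq_zero.1 this).resolve_left (pow_pos (sinh_pos_iff.2 (div_pos hs hρ)) k).ne'
  refine tendsto_const_nhds.congr' (eventually_gt_atTop 0 |>.mono fun r hr => ?_)
  obtain ⟨ξ, hξ, hslope⟩ := exists_deriv_eq_slope φ hr (hc.mono Icc_subset_Ici_self)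
    fun x hx => (hφ.differentiableAt x hx.1).differentiableWithinAt
  rw [hderiv ξ hξ.1, eq_comm, div_eq_zero_iff, sub_eq_zero, sub_eq_zero] at hslope
  exact (hslope.resolve_right hr.ne').symm

lemma deriv_pos_of_lam_neg (hφ : IsRadialSolution ρ k lam φ) (hρ : 0 < ρ) (hk : 1 ≤ k)
    (hc : ContinuousOn φ (Ici 0)) (hlam : lam < 0) (hr : 0 < r)
    (hpos : ∀ t ∈ Ioo 0 r, 0 < φ t) : 0 < deriv φ r := by
  have hint : 0 < ∫ t in 0..r, sinh (t / ρ) ^ k * φ t :=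
    intervalIntegral.intervalIntegral_pos_of_pos_on
      (intervalIntegrable_sinh_pow_mul hc le_rfl hr.le)
      (fun t ht => mul_pos (pow_pos (sinh_pos_iff.2 (div_pos ht.1 hρ)) k) (hpos t ht)) hr
  have hflux : 0 < sinh (r / ρ) ^ k * deriv φ r := by
    rw [hφ.sinh_pow_mul_deriv_eq_integral hρ hk hc hr]
    exact mul_pos (neg_pos.2 hlam) hint
  exact pos_of_mul_pos_right hflux (pow_pos (sinh_pos_iff.2 (div_pos hr hρ)) k).le

lemma pos_of_lam_neg (hφ : IsRadialSolution ρ k lam φ) (hρ : 0 < ρ) (hk : 1 ≤ k)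
    (hc : ContinuousOn φ (Ici 0)) (hlam : lam < 0) (h0 : 0 < φ 0) (hr : 0 ≤ r) : 0 < φ r := by
  refine forall_ge_pos_of_continuousOn hc h0 (fun b hb hpos => ?_) r hr
  have hmono : StrictMonoOn φ (Icc 0 b) :=
    strictMonoOn_of_deriv_pos (convex_Icc 0 b) (hc.mono Icc_subset_Ici_self) fun s hs => by
      rw [interior_Icc] at hs
      exact hφ.deriv_pos_of_lam_neg hρ hk hc hlam hs.1 fun t ht => hpos t ⟨ht.1.le, ht.2.trans hs.2⟩
  exact h0.trans (hmono (left_mem_Icc.2 hb.le) (right_mem_Icc.2 hb.le) hb)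

lemma apply_zero_le_of_lam_neg (hφ : IsRadialSolution ρ k lam φ) (hρ : 0 < ρ) (hk : 1 ≤ k)
    (hc : ContinuousOn φ (Ici 0)) (hlam : lam < 0) (h0 : 0 < φ 0) (hr : 0 ≤ r) : φ 0 ≤ φ r := by
  have hmono : StrictMonoOn φ (Ici 0) :=
    strictMonoOn_of_deriv_pos (convex_Ici 0) hc fun s hs => by
      rw [interior_Ici] at hs
      exact hφ.deriv_pos_of_lam_neg hρ hk hc hlam hs fun t ht =>
        hφ.pos_of_lam_neg hρ hk hc hlam h0 ht.1.le
  exact hmono.monotoneOn self_mem_Ici hr hr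

lemma le_deriv_of_lam_neg (hφ : IsRadialSolution ρ k lam φ) (hρ : 0 < ρ) (hk : 1 ≤ k)
    (hc : ContinuousOn φ (Ici 0)) (hlam : lam < 0) (h0 : 0 < φ 0) (hr : 2 * ρ ≤ r) :
    -lam * ρ * (exp (-1) / 2) ^ k * φ 0 ≤ deriv φ r := by
  have hr0 : 0 < r := by linarith
  have hrρ : 0 ≤ r - ρ := by linarith
  have hpos : ∀ t, 0 ≤ t → 0 < φ t := fun t ht => hφ.pos_of_lam_neg hρ hk hc hlam h0 ht
  -- Only `[r - ρ, r]` is used: there `φ ≥ φ 0` and `sinh (t / ρ) ≥ sinh (r / ρ - 1)`,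
  -- which is at least `exp (-1) / 2 * sinh (r / ρ)`.
  have hhead : 0 ≤ ∫ t in 0..r - ρ, sinh (t / ρ) ^ k * φ t :=
    intervalIntegral.integral_nonneg hrρ fun t ht =>
      mul_nonneg (pow_nonneg (sinh_nonneg_iff.2 (div_nonneg ht.1 hρ.le)) k) (hpos t ht.1).le
  have hx : 1 ≤ r / ρ - 1 := by rw [le_sub_iff_add_le, le_div_iff₀ hρ]; linarith
  have htail : ρ * (sinh (r / ρ - 1) ^ k * φ 0) ≤ ∫ t in r - ρ..r, sinh (t / ρ) ^ k * φ t := by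
    have hle : ∀ t ∈ Icc (r - ρ) r, sinh (r / ρ - 1) ^ k * φ 0 ≤ sinh (t / ρ) ^ k * φ t :=
      fun t ht => by
        have hxt : r / ρ - 1 ≤ t / ρ := by
          rw [sub_le_iff_le_add, div_add_one hρ.ne', div_le_div_iff_of_pos_right hρ]
          linarith [ht.1]
        exact mul_le_mul (pow_le_pow_left₀ (sinh_nonneg_iff.2 (by linarith)) (sinh_le_sinh.2 hxt) k)
          (hφ.apply_zero_le_of_lam_neg hρ hk hc hlam h0 (hrρ.trans ht.1)) h0.le
          (pow_nonneg (sinh_nonneg_iff.2 (div_nonneg (hrρ.trans ht.1) hρ.le)) k)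
    have := intervalIntegral.integral_mono_on (by linarith) intervalIntegrable_const
      (intervalIntegrable_sinh_pow_mul hc hrρ hr0.le) hle
    rwa [intervalIntegral.integral_const, smul_eq_mul, sub_sub_cancel] at this
  have hratio : (exp (-1) / 2) ^ k * sinh (r / ρ) ^ k ≤ sinh (r / ρ - 1) ^ k := by
    rw [← mul_pow]
    refine pow_le_pow_left₀
      (mul_nonneg (by positivity) (sinh_nonneg_iff.2 (div_nonneg hr0.le hρ.le))) ?_ k
    linarith [exp_neg_mul_sinh_le_two_mul_sinh_sub (x := r / ρ) (a := 1) hx]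
  have hsinh : 0 < sinh (r / ρ) ^ k := pow_pos (sinh_pos_iff.2 (div_pos hr0 hρ)) k
  rw [← mul_le_mul_iff_of_pos_left hsinh, hφ.sinh_pow_mul_deriv_eq_integral hρ hk hc hr0,
    ← intervalIntegral.integral_add_adjacent_intervals
      (intervalIntegrable_sinh_pow_mul hc le_rfl hrρ)
      (intervalIntegrable_sinh_pow_mul hc hrρ hr0.le)]
  have hlam' : 0 ≤ -lam := by linarith
  nlinarith [mul_le_mul_of_nonneg_left hratio (mul_nonneg (mul_nonneg hlam' hρ.le) h0.le)]

lemma tendsto_atTop_of_lam_neg (hφ : IsRadialSolution ρ k lam φ) (hρ : 0 < ρ) (hk : 1 ≤ k)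
    (hc : ContinuousOn φ (Ici 0)) (hlam : lam < 0) (h0 : 0 < φ 0) : Tendsto φ atTop atTop :=
  tendsto_atTop_of_eventually_le_deriv (by have := neg_pos.2 hlam; positivity)
    (eventually_ge_atTop (2 * ρ) |>.mono fun r hr =>
      ⟨(hφ.differentiableAt r (by linarith)).hasDerivAt,
        hφ.le_deriv_of_lam_neg hρ hk hc hlam h0 hr⟩)

lemma antitoneOn_radialEnergy (hφ : IsRadialSolution ρ k lam φ) (hρ : 0 < ρ) :
    AntitoneOn (radialEnergy lam φ) (Ioi 0) := by
  refine antitoneOn_of_deriv_nonpos (convex_Ioi 0)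
    (fun r hr => (hφ.hasDerivAt_radialEnergy hr).continuousAt.continuousWithinAt) (fun r hr => ?_)
    fun r hr => ?_
  all_goals rw [interior_Ioi] at hr
  · exact (hφ.hasDerivAt_radialEnergy hr).differentiableAt.differentiableWithinAt
  · rw [(hφ.hasDerivAt_radialEnergy hr).deriv, neg_nonpos]
    have := one_le_cosh_div_sinh (div_pos hr hρ)
    have : (0 : ℝ) ≤ k / ρ := by positivity
    positivity

lemma abs_le_of_lam_pos (hφ : IsRadialSolution ρ k lam φ) (hρ : 0 < ρ) (hlam : 0 < lam)
    (hr : 1 ≤ r) :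
    |deriv φ r| ≤ √(radialEnergy lam φ 1) ∧ |φ r| ≤ √(radialEnergy lam φ 1 / lam) := by
  have hE := hφ.antitoneOn_radialEnergy hρ (mem_Ioi.2 one_pos) (mem_Ioi.2 (by linarith)) hr
  rw [radialEnergy] at hE
  refine ⟨abs_le_sqrt (by nlinarith [sq_nonneg (φ r)]), abs_le_sqrt ?_⟩
  rw [le_div_iff₀ hlam]
  nlinarith [sq_nonneg (deriv φ r)]

lemma abs_deriv_deriv_le (hφ : IsRadialSolution ρ k lam φ) (hρ : 0 < ρ) (hr : 1 ≤ r) :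
    |deriv (deriv φ) r| ≤ k / ρ * (cosh (1 / ρ) / sinh (1 / ρ)) * |deriv φ r| + |lam| * |φ r| := by
  have hr0 : 0 < r := by linarith
  have hcoth := cosh_div_sinh_le_of_le (one_div_pos.2 hρ) (div_le_div_of_nonneg_right hr hρ.le)
  have hcoth0 := one_le_cosh_div_sinh (div_pos hr0 hρ)
  rw [hφ.deriv_deriv_eq hr0, abs_neg]
  refine (abs_add_le _ _).trans ?_
  rw [abs_mul, abs_mul, abs_mul, abs_of_nonneg (by positivity : (0 : ℝ) ≤ k / ρ),
    abs_of_nonneg (by linarith : 0 ≤ cosh (r / ρ) / sinh (r / ρ))]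
  gcongr

lemma exists_tendsto_radialEnergy (hφ : IsRadialSolution ρ k lam φ) (hρ : 0 < ρ)
    (hlam : 0 ≤ lam) : ∃ e, Tendsto (radialEnergy lam φ) atTop (𝓝 e) :=
  ((hφ.antitoneOn_radialEnergy hρ).mono (Ici_subset_Ioi.2 one_pos)).exists_tendsto_atTop
    ⟨0, fun _ ⟨_, _, hx⟩ => hx ▸ radialEnergy_nonneg hlam φ _⟩

lemma tendsto_deriv_zero_of_lam_pos (hφ : IsRadialSolution ρ k lam φ) (hρ : 0 < ρ) (hk : 1 ≤ k)
    (hlam : 0 < lam) : Tendsto (deriv φ) atTop (𝓝 0) := by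
  obtain ⟨e, he⟩ := hφ.exists_tendsto_radialEnergy hρ hlam.le
  have hkρ : 0 < (k : ℝ) / ρ := div_pos (by exact_mod_cast hk) hρ
  refine tendsto_zero_of_deriv_le_neg_mul_sq (R := 1) (mul_pos two_pos hkρ)
    (M := k / ρ * (cosh (1 / ρ) / sinh (1 / ρ)) * √(radialEnergy lam φ 1)
      + lam * √(radialEnergy lam φ 1 / lam))
    (fun x hx => hφ.hasDerivAt_radialEnergy (by linarith)) (fun x hx => ?_) he
    (fun x hx => (hφ.differentiableAt_deriv x (by linarith)).hasDerivAt) (fun x hx => ?_)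
  · have := one_le_cosh_div_sinh (div_pos (by linarith : (0 : ℝ) < x) hρ)
    nlinarith [mul_nonneg hkρ.le (sq_nonneg (deriv φ x))]
  · obtain ⟨hφ'x, hφx⟩ := hφ.abs_le_of_lam_pos hρ hlam hx
    have := one_le_cosh_div_sinh (one_div_pos.2 hρ)
    refine (hφ.abs_deriv_deriv_le hρ hx).trans ?_
    rw [abs_of_pos hlam]
    gcongr

lemma tendsto_radialEnergy_zero_of_lam_pos (hφ : IsRadialSolution ρ k lam φ) (hρ : 0 < ρ)
    (hk : 1 ≤ k) (hlam : 0 < lam) : Tendsto (radialEnergy lam φ) atTop (𝓝 0) := by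
  obtain ⟨e, he⟩ := hφ.exists_tendsto_radialEnergy hρ hlam.le
  have hφ' := hφ.tendsto_deriv_zero_of_lam_pos hρ hk hlam
  have hφbdd : IsBoundedUnder (· ≤ ·) atTop (norm ∘ φ) :=
    isBoundedUnder_of_eventually_le (eventually_ge_atTop 1 |>.mono fun r hr =>
      (hφ.abs_le_of_lam_pos hρ hlam hr).2)
  have hcothbdd : IsBoundedUnder (· ≤ ·) atTop
      (norm ∘ fun r => k / ρ * (cosh (r / ρ) / sinh (r / ρ))) :=
    isBoundedUnder_of_eventually_le (eventually_ge_atTop 1 |>.mono fun r hr => by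
      have hcoth := cosh_div_sinh_le_of_le (one_div_pos.2 hρ) (div_le_div_of_nonneg_right hr hρ.le)
      have := one_le_cosh_div_sinh (div_pos (by linarith : (0 : ℝ) < r) hρ)
      rw [Function.comp_apply, Real.norm_of_nonneg (by positivity)]
      exact mul_le_mul_of_nonneg_left hcoth (by positivity))
  have hu := isBoundedUnder_le_mul_tendsto_zero hφbdd hφ'
  have hu' := (((hφ'.pow 2).const_mul 2).sub he).sub
    (isBoundedUnder_le_mul_tendsto_zero hcothbdd hu)
  have he0 := eq_zero_of_tendsto_of_tendsto_deriv
    (eventually_gt_atTop 0 |>.mono fun r hr => hφ.hasDerivAt_mul_deriv hr) hu hu'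
  rwa [show e = 0 by linarith] at he

lemma tendsto_zero_of_lam_pos (hφ : IsRadialSolution ρ k lam φ) (hρ : 0 < ρ) (hk : 1 ≤ k)
    (hlam : 0 < lam) : Tendsto φ atTop (𝓝 0) := by
  have hlim : Tendsto (fun r => √(radialEnergy lam φ r / lam)) atTop (𝓝 0) := by
    simpa using ((hφ.tendsto_radialEnergy_zero_of_lam_pos hρ hk hlam).div_const lam).sqrt
  refine squeeze_zero_norm (fun r => abs_le_sqrt ?_) hlim
  rw [le_div_iff₀ hlam, radialEnergy]
  nlinarith [sq_nonneg (deriv φ r)]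

end IsRadialSolution

/-- Behavior at infinity of a normalized radial eigenfunction with real eigenvalue `λ`:
`φ(r) → +∞` if `λ < 0`, `φ(r) → 1` if `λ = 0`, and `φ(r) → 0` if `λ > 0`. -/
theorem radial_eigenfunction_behavior_at_infinity
    (ρ : ℝ) (hρ : 0 < ρ) (k : ℕ) (hk : 1 ≤ k)
    (lam : ℝ) (φ : ℝ → ℝ)
    (hc : ContinuousOn φ (Set.Ici 0)) (h0 : φ 0 = 1)
    (hd : ∀ r : ℝ, 0 < r → DifferentiableAt ℝ φ r ∧ DifferentiableAt ℝ (deriv φ) r)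
    (heq : ∀ r : ℝ, 0 < r →
      deriv (deriv φ) r
        + ((k : ℝ) / ρ) * (Real.cosh (r / ρ) / Real.sinh (r / ρ)) * deriv φ r
        + lam * φ r = 0) :
    (lam < 0 → Tendsto φ atTop atTop)
    ∧ (lam = 0 → Tendsto φ atTop (nhds 1))
    ∧ (0 < lam → Tendsto φ atTop (nhds 0)) := by
  have hφ : IsRadialSolution ρ k lam φ := ⟨fun r hr => (hd r hr).1, fun r hr => (hd r hr).2, heq⟩
  refine ⟨fun hlam => hφ.tendsto_atTop_of_lam_neg hρ hk hc hlam (h0 ▸ one_pos),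
    fun hlam => h0 ▸ hφ.tendsto_of_lam_eq_zero hρ hk hc hlam, hφ.tendsto_zero_of_lam_pos hρ hk⟩
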